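/- arXiv:2405.11590 — 2 statements merged into one kernel-verified Lean document; each statement's English description precedes it below -/
import Mathlib

section
/- Let ε ∈ (0, 3/4), λ > 0, μ > 0, δ > 0. Let f : ℝ^{d×r} → ℝ be differentiable with ‖∇f(u) − ∇f(v)‖_F ≤ L̂‖u − v‖_F for all u, v and ‖∇f(u)‖_F ≤ L̂ for all u ∈ St(d,r)^ε. Let S ⊆ St(d,r) be a set of local minimizers of f on St(d,r) with common value f*_S, and assume the local Riemannian PŁ condition: |f(z) − f*_S| ≤ (1/(2μ))‖grad f(z)‖_F² for all z ∈ St(d,r) with dist(S, z) ≤ 2δ. Assume further the descent inequality 𝓛(x) ≤ 𝓛(x') + ⟨∇𝓛(x'), x − x'⟩ + (L'/2)‖x − x'‖_F² holds whenever x ∈ St(d,r)^ε and x' = Proj_St(x), for some L' > 0. Then for every x ∈ St(d,r)^ε with dist(S, x) ≤ δ: 𝓛(x) − f*_S ≤ (1/μ')‖Λ(x)‖_F², where 1/μ' = max{ 1/μ, (2(3+2ε)²L̂² + μL') / (2μλ²(1−ε)²) }. -/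
/-!
Write `x = x' P` for the polar decomposition of `x ∈ St(d,r)^ε`, so that `x' = Proj_St(x)` and
`h = ‖x - x'‖ = ‖P - I‖` lies between `‖xᵀx - I‖ / (2 + ε)` and `‖xᵀx - I‖`. The displacement
`x - x' = x'(P - I)` is normal to `St(d,r)` at `x'`, so `⟨∇𝓛(x'), x - x'⟩ = 0` and the descent
inequality reads `𝓛(x) ≤ f(x') + (L'/2) h²`. Since `x'` is the point of `St(d,r)` nearest to `x`,
`dist(S, x') ≤ 2 dist(S, x) ≤ 2δ` and the PŁ inequality applies at `x'`. Finally the Lipschitz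
gradient moves `grad f` by at most `(3 + 2ε) L̂ h` between `x` and `x'`, while the two summands
of `Λ(x)` are orthogonal and `‖x(xᵀx - I)‖ ≥ (1 - ε) h`.
-/

open Matrix BigOperators Finset

noncomputable section

namespace DRFGT

/-- Frobenius inner product `⟨A, B⟩ = Tr (A Bᵀ)`. -/
def finner {m k : Type*} [Fintype m] [Fintype k] (A B : Matrix m k ℝ) : ℝ :=
  Matrix.trace (A * Bᵀ)

/-- Frobenius norm `‖A‖_F = √⟨A, A⟩`. -/
def fnorm {m k : Type*} [Fintype m] [Fintype k] (A : Matrix m k ℝ) : ℝ :=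
  Real.sqrt (finner A A)

/-- Skew part of a square matrix, `skew(A) = (A − Aᵀ)/2`. -/
def mskew {m : Type*} [Fintype m] (A : Matrix m m ℝ) : Matrix m m ℝ :=
  (2 : ℝ)⁻¹ • (A - Aᵀ)

/-- Symmetric part of a square matrix, `sym(A) = (A + Aᵀ)/2`. -/
def msym {m : Type*} [Fintype m] (A : Matrix m m ℝ) : Matrix m m ℝ :=
  (2 : ℝ)⁻¹ • (A + Aᵀ)

/-- Relative (Riemannian) gradient `grad f(x) = skew(∇f(x) xᵀ) x`, where `Df` denotes the
Euclidean gradient `∇f` of `f`. -/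
def rgrad {d r : ℕ} (Df : Matrix (Fin d) (Fin r) ℝ → Matrix (Fin d) (Fin r) ℝ)
    (x : Matrix (Fin d) (Fin r) ℝ) : Matrix (Fin d) (Fin r) ℝ :=
  mskew (Df x * xᵀ) * x

/-- Landing field `Λ(x) = grad f(x) + λ x (xᵀ x − I_r)`. -/
def landing {d r : ℕ} (Df : Matrix (Fin d) (Fin r) ℝ → Matrix (Fin d) (Fin r) ℝ) (lam : ℝ)
    (x : Matrix (Fin d) (Fin r) ℝ) : Matrix (Fin d) (Fin r) ℝ :=
  rgrad Df x + lam • (x * (xᵀ * x - 1))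

/-- The Stiefel manifold `St(d,r) = {x : xᵀ x = I_r}`. -/
def St (d r : ℕ) : Set (Matrix (Fin d) (Fin r) ℝ) := {x | xᵀ * x = 1}

/-- The safety region `St(d,r)^ε = {x : ‖xᵀ x − I_r‖_F ≤ ε}`. -/
def StEps (d r : ℕ) (ε : ℝ) : Set (Matrix (Fin d) (Fin r) ℝ) :=
  {x | fnorm (xᵀ * x - 1) ≤ ε}

/-- The merit function `𝓛(x) = f(x) − ½⟨sym(xᵀ∇f(x)), xᵀx − I_r⟩ + γ·¼‖xᵀx − I_r‖_F²`. -/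
def merit {d r : ℕ} (f : Matrix (Fin d) (Fin r) ℝ → ℝ)
    (Df : Matrix (Fin d) (Fin r) ℝ → Matrix (Fin d) (Fin r) ℝ) (γ : ℝ)
    (x : Matrix (Fin d) (Fin r) ℝ) : ℝ :=
  f x - (2 : ℝ)⁻¹ * finner (msym (xᵀ * Df x)) (xᵀ * x - 1)
    + γ * (4 : ℝ)⁻¹ * fnorm (xᵀ * x - 1) ^ 2

/-- The gradient of the merit function at on-manifold points:
`∇𝓛(x) = ∇f(x) − x · sym(xᵀ∇f(x))` for `x ∈ St(d,r)`. -/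
def meritGradSt {d r : ℕ} (Df : Matrix (Fin d) (Fin r) ℝ → Matrix (Fin d) (Fin r) ℝ)
    (x : Matrix (Fin d) (Fin r) ℝ) : Matrix (Fin d) (Fin r) ℝ :=
  Df x - x * msym (xᵀ * Df x)

/-- `x'` is the polar factor of a full-column-rank `x`, i.e. the projection `Proj_St(x)` of `x`
onto the Stiefel manifold: if `x = U S Vᵀ` is a thin SVD then `x' = U Vᵀ`, equivalently
`x'ᵀ x' = I_r` and `x = x' P` for a positive definite `P` (namely `P = V S Vᵀ`). -/
def IsPolarFactor {d r : ℕ} (x x' : Matrix (Fin d) (Fin r) ℝ) : Prop :=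
  x'ᵀ * x' = 1 ∧ ∃ P : Matrix (Fin r) (Fin r) ℝ, P.PosDef ∧ x = x' * P

/-- Frobenius distance from `x` to a set `S`: `dist(S,x) = inf_{y ∈ S} ‖x − y‖_F`. -/
def fdist {d r : ℕ} (S : Set (Matrix (Fin d) (Fin r) ℝ)) (x : Matrix (Fin d) (Fin r) ℝ) : ℝ :=
  sInf ((fun y => fnorm (x - y)) '' S)

/-- Network average `z̄ = (1/n) Σᵢ zᵢ`. -/
def avg {n d r : ℕ} (z : Fin n → Matrix (Fin d) (Fin r) ℝ) : Matrix (Fin d) (Fin r) ℝ :=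
  (n : ℝ)⁻¹ • ∑ i, z i

/-- Frobenius norm of a stacked family: `‖𝐳‖_F = (Σᵢ ‖zᵢ‖_F²)^{1/2}`. -/
def snorm {n d r : ℕ} (z : Fin n → Matrix (Fin d) (Fin r) ℝ) : ℝ :=
  Real.sqrt (∑ i, fnorm (z i) ^ 2)


attribute [local instance] Matrix.frobeniusNormedAddCommGroup Matrix.frobeniusNormedSpace

lemma transpose_eq_self_of_posSemidef {k : Type*} {P : Matrix k k ℝ} (hP : P.PosSemidef) :
    Pᵀ = P :=
  (isHermitian_iff_isSymm.mp hP.1).eq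

variable {m k n : Type*} [Fintype m] [Fintype k] [Fintype n]

lemma finner_eq_sum (A B : Matrix m k ℝ) : finner A B = ∑ i, ∑ j, A i j * B i j := by
  simp [finner, Matrix.trace, Matrix.mul_apply]

lemma sq_norm_eq_sum (A : Matrix m k ℝ) : ‖A‖ ^ 2 = ∑ i, ∑ j, A i j ^ 2 := by
  rw [Matrix.frobenius_norm_def, ← Real.rpow_natCast, ← Real.rpow_mul (by positivity)]
  norm_num

lemma finner_self (A : Matrix m k ℝ) : finner A A = ‖A‖ ^ 2 := by
  simp only [finner_eq_sum, sq_norm_eq_sum, ← sq]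

lemma fnorm_eq_norm (A : Matrix m k ℝ) : fnorm A = ‖A‖ := by
  rw [fnorm, finner_self, Real.sqrt_sq (norm_nonneg A)]

lemma finner_comm (A B : Matrix m k ℝ) : finner A B = finner B A := by
  simp only [finner_eq_sum, mul_comm]

lemma finner_neg_right (A B : Matrix m k ℝ) : finner A (-B) = -finner A B := by
  simp [finner_eq_sum]

lemma finner_smul_right (c : ℝ) (A B : Matrix m k ℝ) : finner A (c • B) = c * finner A B := by
  simp [finner_eq_sum, Finset.mul_sum, mul_left_comm]

lemma finner_sub_right (A B C : Matrix m k ℝ) : finner A (B - C) = finner A B - finner A C := by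
  simp [finner_eq_sum, mul_sub]

lemma finner_mul_left (M : Matrix m n ℝ) (A : Matrix n k ℝ) (B : Matrix m k ℝ) :
    finner (M * A) B = finner A (Mᵀ * B) := by
  rw [finner, finner, Matrix.transpose_mul, Matrix.transpose_transpose, Matrix.mul_assoc,
    Matrix.trace_mul_comm, Matrix.mul_assoc]

lemma finner_mul_right (A : Matrix m n ℝ) (M : Matrix n k ℝ) (B : Matrix m k ℝ) :
    finner (A * M) B = finner A (B * Mᵀ) := by
  rw [finner, finner, Matrix.transpose_mul, Matrix.transpose_transpose, Matrix.mul_assoc]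

lemma sq_norm_add (A B : Matrix m k ℝ) : ‖A + B‖ ^ 2 = ‖A‖ ^ 2 + 2 * finner A B + ‖B‖ ^ 2 := by
  simp only [← finner_self, finner_eq_sum, Matrix.add_apply, Finset.mul_sum,
    ← Finset.sum_add_distrib]
  exact Finset.sum_congr rfl fun i _ => Finset.sum_congr rfl fun j _ => by ring

lemma sq_norm_sub (A B : Matrix m k ℝ) : ‖A - B‖ ^ 2 = ‖A‖ ^ 2 - 2 * finner A B + ‖B‖ ^ 2 := by
  rw [sub_eq_add_neg, sq_norm_add, finner_neg_right, norm_neg]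
  ring

lemma abs_finner_le_norm_mul_norm (A B : Matrix m k ℝ) : |finner A B| ≤ ‖A‖ * ‖B‖ := by
  refine abs_le_of_sq_le_sq ?_ (by positivity)
  have := Finset.sum_mul_sq_le_sq_mul_sq Finset.univ (fun p : m × k => A p.1 p.2)
    (fun p => B p.1 p.2)
  simpa only [Finset.univ_product_univ.symm, Finset.sum_product, mul_pow, finner_eq_sum,
    sq_norm_eq_sum] using this

lemma finner_le_norm_mul_norm (A B : Matrix m k ℝ) : finner A B ≤ ‖A‖ * ‖B‖ :=
  le_of_abs_le (abs_finner_le_norm_mul_norm A B)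

lemma finner_eq_zero_of_skew_of_symm {K S : Matrix k k ℝ} (hK : Kᵀ = -K) (hS : Sᵀ = S) :
    finner K S = 0 := by
  have h : (K * S).trace = -(K * S).trace := by
    conv_lhs => rw [← Matrix.trace_transpose, Matrix.transpose_mul, hK, hS, Matrix.mul_neg,
      Matrix.trace_neg, Matrix.trace_mul_comm]
  rw [finner, hS]
  linarith

section Gram

variable [DecidableEq k]

lemma abs_sq_norm_mul_sub_sq_norm_le (x : Matrix m k ℝ) (C : Matrix k n ℝ) :
    |‖x * C‖ ^ 2 - ‖C‖ ^ 2| ≤ ‖xᵀ * x - 1‖ * ‖C‖ ^ 2 := by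
  have hdiff : ‖x * C‖ ^ 2 - ‖C‖ ^ 2 = finner C ((xᵀ * x - 1) * C) := by
    rw [← finner_self, ← finner_self, finner_mul_left, Matrix.sub_mul, Matrix.one_mul,
      finner_sub_right, Matrix.mul_assoc]
  rw [hdiff]
  calc |finner C ((xᵀ * x - 1) * C)| ≤ ‖C‖ * ‖(xᵀ * x - 1) * C‖ :=
        abs_finner_le_norm_mul_norm _ _
    _ ≤ ‖C‖ * (‖xᵀ * x - 1‖ * ‖C‖) := by gcongr; exact Matrix.frobenius_norm_mul _ _
    _ = ‖xᵀ * x - 1‖ * ‖C‖ ^ 2 := by ring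

variable {ε : ℝ} {x : Matrix m k ℝ}

lemma norm_mul_le_of_gram_left (hx : ‖xᵀ * x - 1‖ ≤ ε) (C : Matrix k n ℝ) :
    ‖x * C‖ ≤ (1 + ε) * ‖C‖ := by
  have hε : 0 ≤ ε := (norm_nonneg _).trans hx
  have h := (abs_le.mp (abs_sq_norm_mul_sub_sq_norm_le x C)).2
  rw [← sq_le_sq₀ (norm_nonneg _) (by positivity)]
  nlinarith [mul_le_mul_of_nonneg_right hx (sq_nonneg ‖C‖)]

lemma one_sub_mul_sq_norm_le_of_gram (hx : ‖xᵀ * x - 1‖ ≤ ε) (C : Matrix k n ℝ) :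
    (1 - ε) * ‖C‖ ^ 2 ≤ ‖x * C‖ ^ 2 := by
  have h := (abs_le.mp (abs_sq_norm_mul_sub_sq_norm_le x C)).1
  nlinarith [mul_le_mul_of_nonneg_right hx (sq_nonneg ‖C‖)]

lemma norm_transpose_mul_le_of_gram (hx : ‖xᵀ * x - 1‖ ≤ ε) (E : Matrix m n ℝ) :
    ‖xᵀ * E‖ ≤ (1 + ε) * ‖E‖ := by
  have hε : 0 ≤ ε := (norm_nonneg _).trans hx
  have h : ‖xᵀ * E‖ ^ 2 ≤ ‖E‖ * ((1 + ε) * ‖xᵀ * E‖) := by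
    calc ‖xᵀ * E‖ ^ 2 = finner E (x * (xᵀ * E)) := by
          rw [← finner_self, finner_mul_left, Matrix.transpose_transpose]
      _ ≤ ‖E‖ * ‖x * (xᵀ * E)‖ := finner_le_norm_mul_norm _ _
      _ ≤ ‖E‖ * ((1 + ε) * ‖xᵀ * E‖) := by gcongr; exact norm_mul_le_of_gram_left hx _
  rcases (norm_nonneg (xᵀ * E)).eq_or_lt with h0 | hpos
  · rw [← h0]; positivity
  · exact le_of_mul_le_mul_right (by linarith) hpos

lemma norm_mul_le_of_gram_right (hx : ‖xᵀ * x - 1‖ ≤ ε) (D : Matrix n m ℝ) :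
    ‖D * x‖ ≤ (1 + ε) * ‖D‖ := by
  rw [← Matrix.frobenius_norm_transpose, Matrix.transpose_mul,
    ← Matrix.frobenius_norm_transpose D]
  exact norm_transpose_mul_le_of_gram hx _

lemma norm_isometry_mul {u : Matrix m k ℝ} (hu : uᵀ * u = 1) (C : Matrix k n ℝ) :
    ‖u * C‖ = ‖C‖ := by
  have h := abs_sq_norm_mul_sub_sq_norm_le u C
  rw [hu, sub_self, norm_zero, zero_mul, abs_nonpos_iff, sub_eq_zero] at h
  exact (sq_eq_sq₀ (norm_nonneg _) (norm_nonneg _)).mp h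

lemma norm_mul_isometry_le {y : Matrix m k ℝ} (hy : yᵀ * y = 1) (D : Matrix n m ℝ) :
    ‖D * y‖ ≤ ‖D‖ := by
  simpa using norm_mul_le_of_gram_right (ε := 0) (by simp [hy]) D

lemma norm_eq_of_isometry {u y : Matrix m k ℝ} (hu : uᵀ * u = 1) (hy : yᵀ * y = 1) :
    ‖u‖ = ‖y‖ := by
  rw [← u.mul_one, ← y.mul_one, norm_isometry_mul hu, norm_isometry_mul hy]

end Gram

section Polar

variable [DecidableEq k] {x x' : Matrix m k ℝ} {P : Matrix k k ℝ}

lemma isUnit_of_norm_sub_one_lt_one {M : Matrix k k ℝ} (h : ‖M - 1‖ < 1) : IsUnit M := by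
  let _ := Matrix.frobeniusNormedRing (m := k) (α := ℝ)
  simpa using isUnit_one_sub_of_norm_lt_one (x := 1 - M) (by rwa [norm_sub_rev])

open scoped MatrixOrder in
lemma exists_polar_of_norm_gram_sub_one_lt_one (hx : ‖xᵀ * x - 1‖ < 1) :
    ∃ (x' : Matrix m k ℝ) (P : Matrix k k ℝ), x'ᵀ * x' = 1 ∧ P.PosDef ∧ x = x' * P := by
  set P := CFC.sqrt (xᵀ * x)
  have hPsd : P.PosSemidef := (CFC.sqrt_nonneg _).posSemidef
  have hPP : P * P = xᵀ * x :=
    CFC.sqrt_mul_sqrt_self _ (Matrix.posSemidef_conjTranspose_mul_self x).nonneg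
  have hPunit : IsUnit P := isUnit_of_mul_isUnit_left (hPP ▸ isUnit_of_norm_sub_one_lt_one hx)
  have hPdet : IsUnit P.det := (Matrix.isUnit_iff_isUnit_det P).mp hPunit
  refine ⟨x * P⁻¹, P, ?_, hPsd.posDef_iff_isUnit.mpr hPunit, ?_⟩
  · rw [Matrix.transpose_mul, Matrix.transpose_nonsing_inv, transpose_eq_self_of_posSemidef hPsd,
      Matrix.mul_assoc, ← Matrix.mul_assoc xᵀ, ← hPP, Matrix.mul_assoc P P,
      Matrix.mul_nonsing_inv _ hPdet, Matrix.mul_one, Matrix.nonsing_inv_mul _ hPdet]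
  · rw [Matrix.mul_assoc, Matrix.nonsing_inv_mul _ hPdet, Matrix.mul_one]

lemma norm_sub_eq_of_polar (hx' : x'ᵀ * x' = 1) (hxP : x = x' * P) : ‖x - x'‖ = ‖P - 1‖ := by
  rw [hxP, ← norm_isometry_mul hx' (P - 1), Matrix.mul_sub, Matrix.mul_one]

lemma gram_eq_of_polar (hx' : x'ᵀ * x' = 1) (hP : P.PosSemidef) (hxP : x = x' * P) :
    xᵀ * x = P * P := by
  rw [hxP, Matrix.transpose_mul, transpose_eq_self_of_posSemidef hP, Matrix.mul_assoc,
    ← Matrix.mul_assoc x'ᵀ, hx', Matrix.one_mul]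

lemma norm_le_norm_add_one_mul (hP : P.PosSemidef) (C : Matrix k n ℝ) :
    ‖C‖ ≤ ‖(P + 1) * C‖ := by
  have hPC : 0 ≤ finner (P * C) C := by
    have h := (hP.conjTranspose_mul_mul_same C).trace_nonneg
    rw [Matrix.conjTranspose_eq_transpose_of_trivial, Matrix.mul_assoc, Matrix.trace_mul_comm,
      Matrix.mul_assoc] at h
    rwa [finner, Matrix.mul_assoc]
  rw [← sq_le_sq₀ (norm_nonneg _) (norm_nonneg _), Matrix.add_mul, Matrix.one_mul, sq_norm_add]
  nlinarith [sq_nonneg ‖P * C‖]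

lemma norm_sub_le_norm_gram_sub_one_of_polar (hx' : x'ᵀ * x' = 1) (hP : P.PosSemidef)
    (hxP : x = x' * P) : ‖x - x'‖ ≤ ‖xᵀ * x - 1‖ := by
  rw [norm_sub_eq_of_polar hx' hxP, gram_eq_of_polar hx' hP hxP,
    show P * P - 1 = (P + 1) * (P - 1) by noncomm_ring]
  exact norm_le_norm_add_one_mul hP _

lemma norm_gram_sub_one_le_of_polar {ε : ℝ} (hx : ‖xᵀ * x - 1‖ ≤ ε) (hx' : x'ᵀ * x' = 1)
    (hP : P.PosSemidef) (hxP : x = x' * P) : ‖xᵀ * x - 1‖ ≤ (2 + ε) * ‖x - x'‖ := by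
  have hPx : ‖P * (P - 1)‖ = ‖x * (P - 1)‖ := by
    rw [hxP, Matrix.mul_assoc, norm_isometry_mul hx']
  calc ‖xᵀ * x - 1‖ = ‖P * (P - 1) + (P - 1)‖ := by
        rw [gram_eq_of_polar hx' hP hxP]; congr 1; noncomm_ring
    _ ≤ ‖x * (P - 1)‖ + ‖P - 1‖ := hPx ▸ norm_add_le _ _
    _ ≤ (1 + ε) * ‖P - 1‖ + ‖P - 1‖ := by gcongr; exact norm_mul_le_of_gram_left hx _
    _ = (2 + ε) * ‖x - x'‖ := by rw [norm_sub_eq_of_polar hx' hxP]; ring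

lemma one_sub_sq_mul_sq_norm_sub_le_of_polar {ε : ℝ} (hε : ε ≤ 1) (hx : ‖xᵀ * x - 1‖ ≤ ε)
    (hx' : x'ᵀ * x' = 1) (hP : P.PosSemidef) (hxP : x = x' * P) :
    (1 - ε) ^ 2 * ‖x - x'‖ ^ 2 ≤ ‖x * (xᵀ * x - 1)‖ ^ 2 := by
  have hε0 : 0 ≤ ε := (norm_nonneg _).trans hx
  have hh := pow_le_pow_left₀ (norm_nonneg _) (norm_sub_le_norm_gram_sub_one_of_polar hx' hP hxP) 2
  have hN := one_sub_mul_sq_norm_le_of_gram hx (xᵀ * x - 1)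
  nlinarith [sq_nonneg ‖x - x'‖]

open scoped MatrixOrder in
lemma finner_transpose_mul_le_trace (hP : P.PosSemidef) {u y : Matrix m k ℝ}
    (hu : uᵀ * u = 1) (hy : yᵀ * y = 1) : finner P (uᵀ * y) ≤ P.trace := by
  set R := CFC.sqrt P
  have hRt : Rᵀ = R := transpose_eq_self_of_posSemidef (CFC.sqrt_nonneg P).posSemidef
  have hRR : R * R = P := CFC.sqrt_mul_sqrt_self P hP.nonneg
  have hR : ‖Rᵀ * (uᵀ * y)‖ ≤ ‖R‖ := by
    calc ‖Rᵀ * (uᵀ * y)‖ = ‖(u * R)ᵀ * y‖ := by rw [Matrix.transpose_mul, Matrix.mul_assoc]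
      _ ≤ ‖(u * R)ᵀ‖ := norm_mul_isometry_le hy _
      _ = ‖R‖ := by rw [Matrix.frobenius_norm_transpose, norm_isometry_mul hu]
  calc finner P (uᵀ * y) = finner R (Rᵀ * (uᵀ * y)) := by rw [← hRR, finner_mul_left]
    _ ≤ ‖R‖ * ‖R‖ := (finner_le_norm_mul_norm _ _).trans (by gcongr)
    _ = P.trace := by rw [← sq, ← finner_self, finner, hRt, hRR]

lemma norm_sub_le_of_polar {y : Matrix m k ℝ} (hx' : x'ᵀ * x' = 1) (hP : P.PosSemidef)
    (hxP : x = x' * P) (hy : yᵀ * y = 1) : ‖x - x'‖ ≤ ‖x - y‖ := by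
  have hxx' : finner x x' = P.trace := by
    rw [hxP, finner_mul_left, hx', finner, Matrix.transpose_one, Matrix.mul_one]
  have hxy : finner x y ≤ P.trace := by
    rw [hxP, finner_mul_left]; exact finner_transpose_mul_le_trace hP hx' hy
  rw [← sq_le_sq₀ (norm_nonneg _) (norm_nonneg _), sq_norm_sub, sq_norm_sub,
    norm_eq_of_isometry hx' hy]
  linarith

end Polar

lemma transpose_mskew (A : Matrix k k ℝ) : (mskew A)ᵀ = -mskew A := by
  rw [mskew, Matrix.transpose_smul, Matrix.transpose_sub, Matrix.transpose_transpose, ← smul_neg,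
    neg_sub]

lemma finner_mskew_mul_mul_eq_zero (A : Matrix m m ℝ) (x : Matrix m k ℝ) {S : Matrix k k ℝ}
    (hS : Sᵀ = S) : finner (mskew A * x) (x * S) = 0 := by
  rw [finner_mul_right]
  refine finner_eq_zero_of_skew_of_symm (transpose_mskew A) ?_
  rw [Matrix.transpose_mul, Matrix.transpose_mul, Matrix.transpose_transpose, hS, Matrix.mul_assoc]

section GradientDifference

variable [DecidableEq k]

lemma two_smul_mskew_mul_sub_mskew_mul {x x' : Matrix m k ℝ} (hx' : x'ᵀ * x' = 1)
    (A B : Matrix m k ℝ) :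
    (2 : ℝ) • (mskew (A * xᵀ) * x - mskew (B * x'ᵀ) * x') =
      A * (xᵀ * x - 1) + (A - B) - (x - x') * (Aᵀ * x) - x' * ((A - B)ᵀ * x)
        - x' * (Bᵀ * (x - x')) := by
  have hB : mskew (B * x'ᵀ) * x' = (2 : ℝ)⁻¹ • (B - x' * (Bᵀ * x')) := by
    rw [mskew, Matrix.smul_mul, Matrix.sub_mul, Matrix.transpose_mul, Matrix.transpose_transpose,
      Matrix.mul_assoc, hx', Matrix.mul_one, Matrix.mul_assoc]
  rw [hB, mskew, Matrix.smul_mul, Matrix.transpose_mul, Matrix.transpose_transpose, ← smul_sub,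
    smul_smul, mul_inv_cancel₀ two_ne_zero, one_smul, Matrix.transpose_sub]
  simp only [Matrix.mul_sub, Matrix.sub_mul, Matrix.mul_assoc, Matrix.mul_one]
  abel

lemma norm_mskew_mul_sub_mskew_mul_le {x x' A B : Matrix m k ℝ} {P : Matrix k k ℝ} {ε L : ℝ}
    (hx : ‖xᵀ * x - 1‖ ≤ ε) (hx' : x'ᵀ * x' = 1) (hP : P.PosSemidef) (hxP : x = x' * P)
    (hA : ‖A‖ ≤ L) (hB : ‖B‖ ≤ L) (hAB : ‖A - B‖ ≤ L * ‖x - x'‖) :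
    ‖mskew (A * xᵀ) * x - mskew (B * x'ᵀ) * x'‖ ≤ (3 + 2 * ε) * L * ‖x - x'‖ := by
  have hε : 0 ≤ ε := (norm_nonneg _).trans hx
  have hL : 0 ≤ L := (norm_nonneg _).trans hA
  have hLh : 0 ≤ L * ‖x - x'‖ := mul_nonneg hL (norm_nonneg _)
  have hN : ‖A * (xᵀ * x - 1)‖ ≤ L * ((2 + ε) * ‖x - x'‖) :=
    (Matrix.frobenius_norm_mul _ _).trans
      (by gcongr; exact norm_gram_sub_one_le_of_polar hx hx' hP hxP)
  have hAx : ‖(x - x') * (Aᵀ * x)‖ ≤ ‖x - x'‖ * ((1 + ε) * L) := by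
    have : ‖Aᵀ * x‖ ≤ (1 + ε) * L :=
      (norm_mul_le_of_gram_right hx _).trans (by rw [Matrix.frobenius_norm_transpose]; gcongr)
    exact (Matrix.frobenius_norm_mul _ _).trans (by gcongr)
  have hABx : ‖x' * ((A - B)ᵀ * x)‖ ≤ (1 + ε) * (L * ‖x - x'‖) := by
    rw [norm_isometry_mul hx']
    exact (norm_mul_le_of_gram_right hx _).trans (by rw [Matrix.frobenius_norm_transpose]; gcongr)
  have hBx : ‖x' * (Bᵀ * (x - x'))‖ ≤ L * ‖x - x'‖ := by
    rw [norm_isometry_mul hx']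
    exact (Matrix.frobenius_norm_mul _ _).trans (by rw [Matrix.frobenius_norm_transpose]; gcongr)
  have hsum := norm_sub_le_of_le (norm_sub_le_of_le (norm_sub_le_of_le
    (norm_add_le_of_le hN hAB) hAx) hABx) hBx
  rw [← two_smul_mskew_mul_sub_mskew_mul hx', norm_smul, Real.norm_two] at hsum
  nlinarith [mul_nonneg hε hLh]

end GradientDifference

section Stiefel

variable {d r : ℕ}

lemma merit_of_mem_St (f : Matrix (Fin d) (Fin r) ℝ → ℝ)
    (Df : Matrix (Fin d) (Fin r) ℝ → Matrix (Fin d) (Fin r) ℝ) (γ : ℝ)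
    {x : Matrix (Fin d) (Fin r) ℝ} (hx : xᵀ * x = 1) : merit f Df γ x = f x := by
  simp [merit, hx, finner, fnorm_eq_norm]

lemma finner_meritGradSt_mul_eq_zero (Df : Matrix (Fin d) (Fin r) ℝ → Matrix (Fin d) (Fin r) ℝ)
    {x' : Matrix (Fin d) (Fin r) ℝ} (hx' : x'ᵀ * x' = 1) {S : Matrix (Fin r) (Fin r) ℝ}
    (hS : Sᵀ = S) : finner (meritGradSt Df x') (x' * S) = 0 := by
  have hskew : x'ᵀ * Df x' - msym (x'ᵀ * Df x') = mskew (x'ᵀ * Df x') := by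
    rw [msym, mskew]; module
  rw [finner_comm, finner_mul_left, meritGradSt, Matrix.mul_sub, ← Matrix.mul_assoc, hx',
    Matrix.one_mul, hskew, finner_comm]
  exact finner_eq_zero_of_skew_of_symm (transpose_mskew _) hS

lemma merit_le_of_descent_of_polar {f : Matrix (Fin d) (Fin r) ℝ → ℝ}
    {Df : Matrix (Fin d) (Fin r) ℝ → Matrix (Fin d) (Fin r) ℝ} {γ L' : ℝ}
    {x x' : Matrix (Fin d) (Fin r) ℝ} {P : Matrix (Fin r) (Fin r) ℝ} (hx' : x'ᵀ * x' = 1)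
    (hP : P.PosSemidef) (hxP : x = x' * P)
    (hdescent : merit f Df γ x ≤ merit f Df γ x' + finner (meritGradSt Df x') (x - x')
      + L' / 2 * fnorm (x - x') ^ 2) :
    merit f Df γ x ≤ f x' + L' / 2 * ‖x - x'‖ ^ 2 := by
  have hP1 : (P - 1)ᵀ = P - 1 := by
    rw [Matrix.transpose_sub, transpose_eq_self_of_posSemidef hP, Matrix.transpose_one]
  have hnormal : finner (meritGradSt Df x') (x - x') = 0 := by
    rw [show x - x' = x' * (P - 1) by rw [hxP, Matrix.mul_sub, Matrix.mul_one]]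
    exact finner_meritGradSt_mul_eq_zero Df hx' hP1
  rwa [merit_of_mem_St f Df γ hx', hnormal, add_zero, fnorm_eq_norm] at hdescent

lemma sq_norm_landing (Df : Matrix (Fin d) (Fin r) ℝ → Matrix (Fin d) (Fin r) ℝ)
    (lam : ℝ) (x : Matrix (Fin d) (Fin r) ℝ) :
    ‖landing Df lam x‖ ^ 2 = ‖rgrad Df x‖ ^ 2 + lam ^ 2 * ‖x * (xᵀ * x - 1)‖ ^ 2 := by
  have hN : (xᵀ * x - 1)ᵀ = xᵀ * x - 1 := by simp
  rw [landing, sq_norm_add, finner_smul_right, rgrad, finner_mskew_mul_mul_eq_zero _ _ hN,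
    norm_smul, mul_pow, Real.norm_eq_abs, sq_abs]
  ring

lemma fdist_eq_infDist (S : Set (Matrix (Fin d) (Fin r) ℝ)) (x : Matrix (Fin d) (Fin r) ℝ) :
    fdist S x = Metric.infDist x S := by
  rw [fdist, Metric.infDist_eq_iInf, sInf_image']
  simp [fnorm_eq_norm, dist_eq_norm]

lemma fdist_le_fdist_add_norm_sub (S : Set (Matrix (Fin d) (Fin r) ℝ))
    (x y : Matrix (Fin d) (Fin r) ℝ) : fdist S y ≤ fdist S x + ‖x - y‖ := by
  simpa only [fdist_eq_infDist, dist_eq_norm, norm_sub_rev y x] using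
    Metric.infDist_le_infDist_add_dist (x := y) (y := x) (s := S)

lemma norm_sub_le_fdist_of_polar {S : Set (Matrix (Fin d) (Fin r) ℝ)} (hSsub : S ⊆ St d r)
    (hSne : S.Nonempty) {x x' : Matrix (Fin d) (Fin r) ℝ} {P : Matrix (Fin r) (Fin r) ℝ}
    (hx' : x'ᵀ * x' = 1) (hP : P.PosSemidef) (hxP : x = x' * P) : ‖x - x'‖ ≤ fdist S x := by
  rw [fdist_eq_infDist]
  exact (Metric.le_infDist hSne).2 fun y hy =>
    (norm_sub_le_of_polar hx' hP hxP (hSsub hy)).trans_eq (dist_eq_norm _ _).symm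

end Stiefel

/-- In the application `G, G'` are `‖grad f(x)‖, ‖grad f(x')‖`, `h = ‖x - x'‖`,
`W = ‖x(xᵀx - I)‖`, `c = 1 - ε`, and `a * b = (3 + 2ε) L̂`. -/
lemma inv_two_mul_sq_add_le_max_mul {μ L' lam c a b G G' h W : ℝ} (hμ : 0 < μ) (hlam : lam ≠ 0)
    (hc : 0 < c) (hG' : G' ≤ G + a * b * h) (hG'0 : 0 ≤ G') (hW : c ^ 2 * h ^ 2 ≤ W ^ 2) :
    (2 * μ)⁻¹ * G' ^ 2 + L' / 2 * h ^ 2 ≤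
      max (1 / μ) ((2 * a ^ 2 * b ^ 2 + μ * L') / (2 * μ * lam ^ 2 * c ^ 2))
        * (G ^ 2 + lam ^ 2 * W ^ 2) := by
  set M := max (1 / μ) ((2 * a ^ 2 * b ^ 2 + μ * L') / (2 * μ * lam ^ 2 * c ^ 2))
  have hM : 0 < M := (by positivity : (0 : ℝ) < 1 / μ).trans_le (le_max_left _ _)
  have hG'sq : G' ^ 2 ≤ 2 * G ^ 2 + 2 * (a * b) ^ 2 * h ^ 2 := by
    nlinarith [sq_nonneg (G - a * b * h)]
  have hK : (2 * μ)⁻¹ * (2 * (a * b) ^ 2 * h ^ 2) + L' / 2 * h ^ 2 =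
      (2 * a ^ 2 * b ^ 2 + μ * L') / (2 * μ * lam ^ 2 * c ^ 2) * (lam ^ 2 * (c ^ 2 * h ^ 2)) := by
    field_simp
  calc (2 * μ)⁻¹ * G' ^ 2 + L' / 2 * h ^ 2
      ≤ 1 / μ * G ^ 2 + ((2 * μ)⁻¹ * (2 * (a * b) ^ 2 * h ^ 2) + L' / 2 * h ^ 2) := by
        have := mul_le_mul_of_nonneg_left hG'sq (by positivity : (0 : ℝ) ≤ (2 * μ)⁻¹)
        field_simp at this ⊢
        linarith
    _ ≤ M * G ^ 2 + M * (lam ^ 2 * (c ^ 2 * h ^ 2)) := by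
        rw [hK]
        gcongr
        · exact le_max_left _ _
        · exact le_max_right _ _
    _ ≤ M * (G ^ 2 + lam ^ 2 * W ^ 2) := by
        rw [mul_add]
        gcongr

theorem pseudo_gradient_domination_general {d r : ℕ} (ε lam μ δ Lhat L' γ fstar : ℝ)
    (hε : ε ∈ Set.Ioo (0 : ℝ) (3 / 4)) (hlam : 0 < lam) (hμ : 0 < μ)
    (f : Matrix (Fin d) (Fin r) ℝ → ℝ)
    (Df : Matrix (Fin d) (Fin r) ℝ → Matrix (Fin d) (Fin r) ℝ)
    (hLip : ∀ u v : Matrix (Fin d) (Fin r) ℝ, fnorm (Df u - Df v) ≤ Lhat * fnorm (u - v))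
    (hBnd : ∀ u ∈ StEps d r ε, fnorm (Df u) ≤ Lhat)
    (S : Set (Matrix (Fin d) (Fin r) ℝ)) (hSsub : S ⊆ St d r) (hSne : S.Nonempty)
    (hPL : ∀ z ∈ St d r, fdist S z ≤ 2 * δ →
      |f z - fstar| ≤ (2 * μ)⁻¹ * fnorm (rgrad Df z) ^ 2)
    (hdescent : ∀ x x' : Matrix (Fin d) (Fin r) ℝ, x ∈ StEps d r ε → IsPolarFactor x x' →
      merit f Df γ x ≤ merit f Df γ x' + finner (meritGradSt Df x') (x - x')
        + L' / 2 * fnorm (x - x') ^ 2) :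
    ∀ x ∈ StEps d r ε, fdist S x ≤ δ →
      merit f Df γ x - fstar ≤
        max (1 / μ) ((2 * (3 + 2 * ε) ^ 2 * Lhat ^ 2 + μ * L') / (2 * μ * lam ^ 2 * (1 - ε) ^ 2))
          * fnorm (landing Df lam x) ^ 2 := by
  intro x hx hxS
  have hxε : ‖xᵀ * x - 1‖ ≤ ε := (fnorm_eq_norm _).symm.trans_le hx
  obtain ⟨x', P, hx', hP, hxP⟩ :=
    exists_polar_of_norm_gram_sub_one_lt_one (hxε.trans_lt (by linarith [hε.2]))
  have hx'ε : x' ∈ StEps d r ε := by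
    simp only [StEps, Set.mem_ofPred_eq, hx', sub_self, fnorm_eq_norm, norm_zero]; exact hε.1.le
  have hx'S : fdist S x' ≤ 2 * δ := by
    linarith [fdist_le_fdist_add_norm_sub S x x',
      norm_sub_le_fdist_of_polar hSsub hSne hx' hP.posSemidef hxP]
  have hmerit := merit_le_of_descent_of_polar hx' hP.posSemidef hxP
    (hdescent x x' hx ⟨hx', P, hP, hxP⟩)
  have hPL' : f x' - fstar ≤ (2 * μ)⁻¹ * ‖rgrad Df x'‖ ^ 2 := by
    simpa only [fnorm_eq_norm] using le_of_abs_le (hPL x' hx' hx'S)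
  have hgrad : ‖rgrad Df x'‖ ≤ ‖rgrad Df x‖ + (3 + 2 * ε) * Lhat * ‖x - x'‖ :=
    (norm_le_norm_add_norm_sub _ _).trans <| add_le_add le_rfl <|
      norm_mskew_mul_sub_mskew_mul_le hxε hx' hP.posSemidef hxP
        (by simpa only [fnorm_eq_norm] using hBnd x hx)
        (by simpa only [fnorm_eq_norm] using hBnd x' hx'ε)
        (by simpa only [fnorm_eq_norm] using hLip x x')
  rw [fnorm_eq_norm, sq_norm_landing]
  calc merit f Df γ x - fstar ≤ (2 * μ)⁻¹ * ‖rgrad Df x'‖ ^ 2 + L' / 2 * ‖x - x'‖ ^ 2 := by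
        linarith
    _ ≤ _ := inv_two_mul_sq_add_le_max_mul hμ hlam.ne' (by linarith [hε.2]) hgrad (norm_nonneg _)
        (one_sub_sq_mul_sq_norm_sub_le_of_polar (by linarith [hε.2]) hxε hx' hP.posSemidef hxP)

/-- pseudo gradient domination. Let `ε ∈ (0,3/4)`, `λ, μ, δ > 0`, let `f` be
differentiable with `L̂`-Lipschitz gradient `Df`, `‖∇f(u)‖_F ≤ L̂` on `St(d,r)^ε`. Let
`S ⊆ St(d,r)` be a set of local minimizers of `f` on `St(d,r)` with common value `f*_S`, let the
local Riemannian PŁ condition hold on `{z ∈ St(d,r) : dist(S,z) ≤ 2δ}`, and assume the descent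
inequality for the merit function `𝓛` between `x ∈ St(d,r)^ε` and `x' = Proj_St(x)` with
constant `L' > 0`. Then for every `x ∈ St(d,r)^ε` with `dist(S,x) ≤ δ`,
`𝓛(x) − f*_S ≤ (1/μ')‖Λ(x)‖_F²` with
`1/μ' = max{1/μ, (2(3+2ε)²L̂² + μL')/(2μλ²(1−ε)²)}`. -/
theorem pseudo_gradient_domination {d r : ℕ} (ε lam μ δ Lhat L' γ fstar : ℝ)
    (hε : ε ∈ Set.Ioo (0 : ℝ) (3 / 4)) (hlam : 0 < lam) (hμ : 0 < μ) (hδ : 0 < δ)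
    (hL' : 0 < L')
    (f : Matrix (Fin d) (Fin r) ℝ → ℝ)
    (Df : Matrix (Fin d) (Fin r) ℝ → Matrix (Fin d) (Fin r) ℝ)
    (hLip : ∀ u v : Matrix (Fin d) (Fin r) ℝ, fnorm (Df u - Df v) ≤ Lhat * fnorm (u - v))
    (hBnd : ∀ u ∈ StEps d r ε, fnorm (Df u) ≤ Lhat)
    (S : Set (Matrix (Fin d) (Fin r) ℝ)) (hSsub : S ⊆ St d r) (hSne : S.Nonempty)
    (hSmin : ∀ y ∈ S, ∃ η > (0 : ℝ), ∀ z ∈ St d r, fnorm (z - y) ≤ η → f y ≤ f z)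
    (hSval : ∀ y ∈ S, f y = fstar)
    (hPL : ∀ z ∈ St d r, fdist S z ≤ 2 * δ →
      |f z - fstar| ≤ (2 * μ)⁻¹ * fnorm (rgrad Df z) ^ 2)
    (hdescent : ∀ x x' : Matrix (Fin d) (Fin r) ℝ, x ∈ StEps d r ε → IsPolarFactor x x' →
      merit f Df γ x ≤ merit f Df γ x' + finner (meritGradSt Df x') (x - x')
        + L' / 2 * fnorm (x - x') ^ 2) :
    ∀ x ∈ StEps d r ε, fdist S x ≤ δ →
      merit f Df γ x - fstar ≤
        max (1 / μ) ((2 * (3 + 2 * ε) ^ 2 * Lhat ^ 2 + μ * L') / (2 * μ * lam ^ 2 * (1 - ε) ^ 2))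
          * fnorm (landing Df lam x) ^ 2 :=
  pseudo_gradient_domination_general ε lam μ δ Lhat L' γ fstar hε hlam hμ f Df hLip hBnd S hSsub
    hSne hPL hdescent

end DRFGT
end
end

section
/- Let W ∈ ℝ^{n×n} be symmetric doubly stochastic with second-largest singular value σ_W < 1, let α > 0, L' > 0, and let Λ_i : ℝ^{d×r} → ℝ^{d×r} be L'-Lipschitz for each i ∈ [n]. Suppose x_{i,k} = Σ_j W_{ij} x_{j,k−1} − α y_{i,k−1} and y_{i,k} = Σ_j W_{ij} y_{j,k−1} + Λ_i(x_{i,k}) − Λ_i(x_{i,k−1}). Then ‖𝐲_k − 𝐲̄_k‖_F² ≤ ((1+σ_W²)/2 + 4L'²α²(1+σ_W²)/(1−σ_W²)) ‖𝐲_{k−1} − 𝐲̄_{k−1}‖_F² + 8L'²((1+σ_W²)/(1−σ_W²)) ‖𝐱_{k−1} − 𝐱̄_{k−1}‖_F² + 4L'²α²((1+σ_W²)/(1−σ_W²)) ‖𝐲̄_{k−1}‖_F², where ‖𝐲̄_{k−1}‖_F² = n‖ȳ_{k−1}‖_F². -/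
open Matrix BigOperators Finset

noncomputable section

namespace DRFGT

/-!
With `uᵢ = Λᵢ(x_{i,k}) − Λᵢ(x_{i,k−1})`, column-stochasticity of `W` gives
`𝐲_k − 𝐲̄_k = (W𝐲_{k−1} − 𝐲̄_{k−1}) + (𝐮 − 𝐮̄)`. The first term contracts by `σ_W`, the second
is at most `‖𝐮‖_F ≤ L'‖𝐱_k − 𝐱_{k−1}‖_F`, and `𝐱_k − 𝐱_{k−1}` splits into the consensus errors
of `𝐱` and `𝐲` plus `−α𝐲̄_{k−1}`. Squaring the triangle inequality with a weighted Young
inequality produces the constants `(1 + σ_W²)/2` and `(1 + σ_W²)/(1 − σ_W²)`.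
-/

section Stacks

variable {n d r : ℕ}

lemma fnorm_sq_eq_sum {m k : Type*} [Fintype m] [Fintype k] (A : Matrix m k ℝ) :
    fnorm A ^ 2 = ∑ i, ∑ j, A i j ^ 2 := by
  have h : finner A A = ∑ i, ∑ j, A i j ^ 2 := by
    simp [finner, Matrix.trace, Matrix.mul_apply, sq]
  rw [fnorm, Real.sq_sqrt (h ▸ by positivity), h]

lemma snorm_sq_eq_sum (z : Fin n → Matrix (Fin d) (Fin r) ℝ) :
    snorm z ^ 2 = ∑ i, fnorm (z i) ^ 2 :=
  Real.sq_sqrt (by positivity)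

lemma snorm_nonneg (z : Fin n → Matrix (Fin d) (Fin r) ℝ) : 0 ≤ snorm z :=
  Real.sqrt_nonneg _

def stack (z : Fin n → Matrix (Fin d) (Fin r) ℝ) : EuclideanSpace ℝ (Fin n × Fin d × Fin r) :=
  WithLp.toLp 2 fun p => z p.1 p.2.1 p.2.2

lemma snorm_eq_norm_stack (z : Fin n → Matrix (Fin d) (Fin r) ℝ) :
    snorm z = ‖stack z‖ := by
  rw [snorm, EuclideanSpace.norm_eq, Fintype.sum_prod_type]
  congr 1
  refine Finset.sum_congr rfl fun i _ => ?_
  rw [fnorm_sq_eq_sum, Fintype.sum_prod_type]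
  simp [stack, Real.norm_eq_abs, sq_abs]

lemma snorm_add_le (z w : Fin n → Matrix (Fin d) (Fin r) ℝ) :
    snorm (fun i => z i + w i) ≤ snorm z + snorm w := by
  simp only [snorm_eq_norm_stack]
  exact norm_add_le (stack z) (stack w)

lemma snorm_sub_le (z w : Fin n → Matrix (Fin d) (Fin r) ℝ) :
    snorm (fun i => z i - w i) ≤ snorm z + snorm w := by
  simp only [snorm_eq_norm_stack]
  exact norm_sub_le (stack z) (stack w)

lemma snorm_smul (c : ℝ) (z : Fin n → Matrix (Fin d) (Fin r) ℝ) :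
    snorm (fun i => c • z i) = |c| * snorm z := by
  simp only [snorm_eq_norm_stack, ← Real.norm_eq_abs]
  exact norm_smul c (stack z)

lemma sum_sub_mean_sq_le (v : Fin n → ℝ) :
    ∑ i, (v i - (n : ℝ)⁻¹ * ∑ j, v j) ^ 2 ≤ ∑ i, v i ^ 2 := by
  set m := (n : ℝ)⁻¹ * ∑ j, v j
  have hm : ∑ i, (v i - m) ^ 2 = ∑ i, v i ^ 2 - n * m ^ 2 := by
    rcases Nat.eq_zero_or_pos n with rfl | hn
    · simp
    have hsum : ∑ j, v j = n * m := by
      simp only [m]; field_simp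
    simp only [sub_sq, Finset.sum_add_distrib, Finset.sum_sub_distrib, ← Finset.sum_mul,
      ← Finset.mul_sum, hsum, Finset.sum_const, Finset.card_univ, Fintype.card_fin, nsmul_eq_mul]
    ring
  rw [hm]
  exact sub_le_self _ (by positivity)

lemma snorm_sub_avg_le (z : Fin n → Matrix (Fin d) (Fin r) ℝ) :
    snorm (fun i => z i - avg z) ≤ snorm z := by
  refine Real.sqrt_le_sqrt ?_
  simp only [fnorm_sq_eq_sum]
  rw [Finset.sum_comm, Finset.sum_comm (γ := Fin n)]
  refine Finset.sum_le_sum fun a _ => ?_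
  rw [Finset.sum_comm, Finset.sum_comm (γ := Fin n)]
  refine Finset.sum_le_sum fun b _ => ?_
  simpa [avg, Matrix.sum_apply] using sum_sub_mean_sq_le fun i => z i a b

lemma snorm_sq_sub_le_of_lipschitz {L : ℝ}
    {Lam : Fin n → Matrix (Fin d) (Fin r) ℝ → Matrix (Fin d) (Fin r) ℝ}
    (hLip : ∀ i u v, fnorm (Lam i u - Lam i v) ≤ L * fnorm (u - v))
    (x y : Fin n → Matrix (Fin d) (Fin r) ℝ) :
    snorm (fun i => Lam i (x i) - Lam i (y i)) ^ 2 ≤ L ^ 2 * snorm (fun i => x i - y i) ^ 2 := by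
  simp only [snorm_sq_eq_sum, Finset.mul_sum, ← mul_pow]
  exact Finset.sum_le_sum fun i _ =>
    pow_le_pow_left₀ (Real.sqrt_nonneg _) (hLip i (x i) (y i)) 2

lemma avg_mix {W : Matrix (Fin n) (Fin n) ℝ} (hWcol : ∀ j, ∑ i, W i j = 1)
    (z : Fin n → Matrix (Fin d) (Fin r) ℝ) :
    avg (fun i => ∑ j, W i j • z j) = avg z := by
  simp only [avg]
  rw [Finset.sum_comm]
  simp only [← Finset.sum_smul, hWcol, one_smul]

lemma avg_add (z w : Fin n → Matrix (Fin d) (Fin r) ℝ) :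
    avg (fun i => z i + w i) = avg z + avg w := by
  simp only [avg, Finset.sum_add_distrib, smul_add]

end Stacks

/-- Young's inequality `2sAB ≤ (1 - s²)/2 · A² + 2s²/(1 - s²) · B²`, rearranged. -/
lemma sq_mul_add_le {s : ℝ} (hs0 : 0 ≤ s) (hs1 : s < 1) (A B : ℝ) :
    (s * A + B) ^ 2 ≤ (1 + s ^ 2) / 2 * A ^ 2 + (1 + s ^ 2) / (1 - s ^ 2) * B ^ 2 := by
  have h : 0 < 1 - s ^ 2 := by nlinarith
  have key : (1 + s ^ 2) / 2 * A ^ 2 + (1 + s ^ 2) / (1 - s ^ 2) * B ^ 2 - (s * A + B) ^ 2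
      = ((1 - s ^ 2) * A - 2 * s * B) ^ 2 / (2 * (1 - s ^ 2)) := by
    field_simp
    ring
  rw [← sub_nonneg, key]
  positivity

section Consensus

variable {n d r : ℕ} {σW : ℝ} {W : Matrix (Fin n) (Fin n) ℝ}

lemma snorm_tracking_sub_avg_le (hWcol : ∀ j, ∑ i, W i j = 1)
    {y u yc : Fin n → Matrix (Fin d) (Fin r) ℝ}
    (hW : snorm (fun i => (∑ j, W i j • y j) - avg y) ≤ σW * snorm (fun i => y i - avg y))
    (hyc : ∀ i, yc i = (∑ j, W i j • y j) + u i) :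
    snorm (fun i => yc i - avg yc) ≤ σW * snorm (fun i => y i - avg y) + snorm u := by
  have havg : avg yc = avg y + avg u := by
    rw [← avg_mix hWcol y, ← avg_add]
    exact congrArg avg (funext hyc)
  have hsplit : (fun i => yc i - avg yc)
      = fun i => ((∑ j, W i j • y j) - avg y) + (u i - avg u) := by
    funext i; rw [hyc i, havg]; abel
  rw [hsplit]
  exact (snorm_add_le _ _).trans (add_le_add hW (snorm_sub_avg_le u))

lemma snorm_step_le (hσ1 : σW ≤ 1) (α : ℝ) {x y xc : Fin n → Matrix (Fin d) (Fin r) ℝ}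
    (hW : snorm (fun i => (∑ j, W i j • x j) - avg x) ≤ σW * snorm (fun i => x i - avg x))
    (hxc : ∀ i, xc i = (∑ j, W i j • x j) - α • y i) :
    snorm (fun i => xc i - x i) ≤ 2 * snorm (fun i => x i - avg x)
      + |α| * snorm (fun i => y i - avg y) + |α| * snorm (fun _ : Fin n => avg y) := by
  have hsplit : (fun i => xc i - x i) = fun i =>
      ((∑ j, W i j • x j) - avg x - (x i - avg x) - α • (y i - avg y)) - α • avg y := by
    funext i; rw [hxc i]; module
  have h1 := snorm_sub_le (fun i => (∑ j, W i j • x j) - avg x - (x i - avg x)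
    - α • (y i - avg y)) (fun _ => α • avg y)
  have h2 := snorm_sub_le (fun i => (∑ j, W i j • x j) - avg x - (x i - avg x))
    (fun i => α • (y i - avg y))
  have h3 := snorm_sub_le (fun i => (∑ j, W i j • x j) - avg x) (fun i => x i - avg x)
  have hσX : σW * snorm (fun i => x i - avg x) ≤ snorm (fun i => x i - avg x) :=
    mul_le_of_le_one_left (snorm_nonneg _) hσ1
  rw [snorm_smul] at h1 h2
  rw [hsplit]
  linarith

end Consensus

theorem consensus_error_y_general {n d r : ℕ} (σW α L' : ℝ)
    (hσ0 : 0 ≤ σW) (hσ1 : σW < 1)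
    (W : Matrix (Fin n) (Fin n) ℝ)
    (hWsym : Wᵀ = W) (hWrow : ∀ i, ∑ j, W i j = 1)
    (hWcontract : ∀ z : Fin n → Matrix (Fin d) (Fin r) ℝ,
      snorm (fun i => (∑ j, W i j • z j) - avg z) ≤ σW * snorm (fun i => z i - avg z))
    (Lam : Fin n → Matrix (Fin d) (Fin r) ℝ → Matrix (Fin d) (Fin r) ℝ)
    (hLip : ∀ i, ∀ u v : Matrix (Fin d) (Fin r) ℝ,
      fnorm (Lam i u - Lam i v) ≤ L' * fnorm (u - v))
    (xp yp xc yc : Fin n → Matrix (Fin d) (Fin r) ℝ)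
    (hxc : ∀ i, xc i = (∑ j, W i j • xp j) - α • yp i)
    (hyc : ∀ i, yc i = (∑ j, W i j • yp j) + Lam i (xc i) - Lam i (xp i)) :
    snorm (fun i => yc i - avg yc) ^ 2 ≤
      ((1 + σW ^ 2) / 2 + 4 * L' ^ 2 * α ^ 2 * ((1 + σW ^ 2) / (1 - σW ^ 2)))
          * snorm (fun i => yp i - avg yp) ^ 2
        + 8 * L' ^ 2 * ((1 + σW ^ 2) / (1 - σW ^ 2)) * snorm (fun i => xp i - avg xp) ^ 2
        + 4 * L' ^ 2 * α ^ 2 * ((1 + σW ^ 2) / (1 - σW ^ 2))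
          * snorm (fun _ : Fin n => avg yp) ^ 2 := by
  set X := snorm (fun i => xp i - avg xp)
  set Y := snorm (fun i => yp i - avg yp)
  set N := snorm (fun _ : Fin n => avg yp)
  set U := snorm (fun i => Lam i (xc i) - Lam i (xp i))
  have hWcol : ∀ j, ∑ i, W i j = 1 := fun j =>
    (Finset.sum_congr rfl fun i _ => congrFun (congrFun hWsym j) i).trans (hWrow j)
  have hy : snorm (fun i => yc i - avg yc) ≤ σW * Y + U :=
    snorm_tracking_sub_avg_le hWcol (hWcontract yp) fun i => by rw [hyc i, add_sub_assoc]
  have hx2 : snorm (fun i => xc i - xp i) ^ 2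
      ≤ 8 * X ^ 2 + 4 * α ^ 2 * Y ^ 2 + 4 * α ^ 2 * N ^ 2 := by
    have hx := pow_le_pow_left₀ (snorm_nonneg _) (snorm_step_le hσ1.le α (hWcontract xp) hxc) 2
    rw [← sq_abs α]
    nlinarith [sq_nonneg (2 * X - |α| * Y - |α| * N), sq_nonneg (|α| * Y - |α| * N)]
  have hK : 0 ≤ (1 + σW ^ 2) / (1 - σW ^ 2) := div_nonneg (by positivity) (by nlinarith)
  calc snorm (fun i => yc i - avg yc) ^ 2
      ≤ (σW * Y + U) ^ 2 := pow_le_pow_left₀ (snorm_nonneg _) hy 2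
    _ ≤ (1 + σW ^ 2) / 2 * Y ^ 2 + (1 + σW ^ 2) / (1 - σW ^ 2) * U ^ 2 :=
        sq_mul_add_le hσ0 hσ1 Y U
    _ ≤ (1 + σW ^ 2) / 2 * Y ^ 2 + (1 + σW ^ 2) / (1 - σW ^ 2)
          * (L' ^ 2 * (8 * X ^ 2 + 4 * α ^ 2 * Y ^ 2 + 4 * α ^ 2 * N ^ 2)) := by
        gcongr
        exact (snorm_sq_sub_le_of_lipschitz hLip xc xp).trans (by gcongr)
    _ = _ := by ring

/-- consensus error on `𝐲`. For a symmetric doubly stochastic `W` with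
averaging contraction factor `σ_W < 1`, `L'`-Lipschitz maps `Λ_i`, and the updates
`x_{i,k} = Σⱼ W_{ij} x_{j,k−1} − α y_{i,k−1}`,
`y_{i,k} = Σⱼ W_{ij} y_{j,k−1} + Λ_i(x_{i,k}) − Λ_i(x_{i,k−1})`, the consensus error on `𝐲`
satisfies the stated inequality, where `‖𝐲̄_{k−1}‖_F² = n‖ȳ_{k−1}‖_F²`. -/
theorem consensus_error_y {n d r : ℕ} (σW α L' : ℝ)
    (hσ0 : 0 ≤ σW) (hσ1 : σW < 1) (hα : 0 < α) (hL' : 0 < L')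
    (W : Matrix (Fin n) (Fin n) ℝ)
    (hWsym : Wᵀ = W) (hWnn : ∀ i j, 0 ≤ W i j) (hWrow : ∀ i, ∑ j, W i j = 1)
    (hWcontract : ∀ z : Fin n → Matrix (Fin d) (Fin r) ℝ,
      snorm (fun i => (∑ j, W i j • z j) - avg z) ≤ σW * snorm (fun i => z i - avg z))
    (Lam : Fin n → Matrix (Fin d) (Fin r) ℝ → Matrix (Fin d) (Fin r) ℝ)
    (hLip : ∀ i, ∀ u v : Matrix (Fin d) (Fin r) ℝ,
      fnorm (Lam i u - Lam i v) ≤ L' * fnorm (u - v))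
    (xp yp xc yc : Fin n → Matrix (Fin d) (Fin r) ℝ)
    (hxc : ∀ i, xc i = (∑ j, W i j • xp j) - α • yp i)
    (hyc : ∀ i, yc i = (∑ j, W i j • yp j) + Lam i (xc i) - Lam i (xp i)) :
    snorm (fun i => yc i - avg yc) ^ 2 ≤
      ((1 + σW ^ 2) / 2 + 4 * L' ^ 2 * α ^ 2 * ((1 + σW ^ 2) / (1 - σW ^ 2)))
          * snorm (fun i => yp i - avg yp) ^ 2
        + 8 * L' ^ 2 * ((1 + σW ^ 2) / (1 - σW ^ 2)) * snorm (fun i => xp i - avg xp) ^ 2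
        + 4 * L' ^ 2 * α ^ 2 * ((1 + σW ^ 2) / (1 - σW ^ 2))
          * snorm (fun _ : Fin n => avg yp) ^ 2 :=
  consensus_error_y_general σW α L' hσ0 hσ1 W hWsym hWrow hWcontract Lam hLip xp yp xc yc hxc hyc

end DRFGT
end
end
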